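/- arXiv:1402.1157 — 2 statements merged into one kernel-verified Lean document; each statement's English description precedes it below -/
import Mathlib

section
/- Let V and Λ be finite-dimensional real inner product spaces, a : V × V → ℝ a bounded symmetric bilinear form coercive on the kernel of b, and b : V × Λ → ℝ a bounded bilinear form satisfying the inf-sup condition: ∃ β > 0 such that for all σ ∈ Λ, sup over nonzero v of b(v,σ)/‖v‖ ≥ β‖σ‖. Then for any bounded linear functional ℓ on V, the saddle point problem: find (u, λ) with a(u,v) + b(v,λ) = ℓ(v) for all v and b(u,ρ) = 0 for all ρ, has a unique solution. -/
/-!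
The saddle point system is a square linear system between finite-dimensional spaces, so it
suffices that its homogeneous version has only the trivial solution. If `(u, λ)` solves it,
testing the first equation with `v = u` gives `a(u, u) = -b(u, λ) = 0` with `u ∈ ker b`, so
coercivity forces `u = 0`; then `b(·, λ) = 0`, and the inf-sup condition forces `λ = 0`.
-/

section SaddlePoint

variable {R V Λ : Type*} [CommRing R] [AddCommGroup V] [Module R V] [AddCommGroup Λ] [Module R Λ]

def saddlePointOperator (a : V →ₗ[R] V →ₗ[R] R) (b : V →ₗ[R] Λ →ₗ[R] R) :
    V × Λ →ₗ[R] Module.Dual R V × Module.Dual R Λ :=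
  (a.coprod b.flip).prod (b ∘ₗ LinearMap.fst R V Λ)

variable {a : V →ₗ[R] V →ₗ[R] R} {b : V →ₗ[R] Λ →ₗ[R] R}

@[simp]
theorem saddlePointOperator_apply (p : V × Λ) :
    saddlePointOperator a b p = (a p.1 + b.flip p.2, b p.1) :=
  rfl

theorem saddlePointOperator_eq_iff (ℓ : Module.Dual R V) (p : V × Λ) :
    saddlePointOperator a b p = (ℓ, 0) ↔
      (∀ v : V, a p.1 v + b v p.2 = ℓ v) ∧ ∀ ρ : Λ, b p.1 ρ = 0 := by
  simp [Prod.ext_iff, LinearMap.ext_iff]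

theorem saddlePointOperator_injective (hdef : ∀ v, b v = 0 → a v v = 0 → v = 0)
    (hb : Function.Injective b.flip) : Function.Injective (saddlePointOperator a b) := by
  rw [injective_iff_map_eq_zero]
  rintro ⟨u, σ⟩ h
  obtain ⟨hfirst, hu⟩ : a u + b.flip σ = 0 ∧ b u = 0 := by simpa [Prod.ext_iff] using h
  have hauu : a u u = 0 := by simpa [hu] using LinearMap.congr_fun hfirst u
  obtain rfl := hdef u hu hauu
  have hσ : b.flip σ = 0 := by simpa using hfirst
  simpa using (injective_iff_map_eq_zero _).1 hb σ hσ

end SaddlePoint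

section FiniteDimensional

variable {K V Λ : Type*} [Field K] [AddCommGroup V] [Module K V] [FiniteDimensional K V]
  [AddCommGroup Λ] [Module K Λ] [FiniteDimensional K Λ]
  {a : V →ₗ[K] V →ₗ[K] K} {b : V →ₗ[K] Λ →ₗ[K] K}

theorem saddlePointOperator_bijective (hdef : ∀ v, b v = 0 → a v v = 0 → v = 0)
    (hb : Function.Injective b.flip) : Function.Bijective (saddlePointOperator a b) := by
  have hinj := saddlePointOperator_injective hdef hb
  refine ⟨hinj, (LinearMap.injective_iff_surjective_of_finrank_eq_finrank ?_).1 hinj⟩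
  simp [Module.finrank_prod]

theorem existsUnique_saddlePoint (hdef : ∀ v, b v = 0 → a v v = 0 → v = 0)
    (hb : Function.Injective b.flip) (ℓ : Module.Dual K V) :
    ∃! p : V × Λ, (∀ v : V, a p.1 v + b v p.2 = ℓ v) ∧ ∀ ρ : Λ, b p.1 ρ = 0 :=
  (existsUnique_congr (saddlePointOperator_eq_iff ℓ)).1
    ((saddlePointOperator_bijective hdef hb).existsUnique (ℓ, 0))

end FiniteDimensional

theorem LinearMap.flip_injective_of_infSup {V Λ : Type*} [SeminormedAddCommGroup V]
    [Module ℝ V] [NormedAddCommGroup Λ] [Module ℝ Λ] {b : V →ₗ[ℝ] Λ →ₗ[ℝ] ℝ} {β : ℝ}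
    (hβ : 0 < β) (hinfsup : ∀ σ : Λ, β * ‖σ‖ ≤ ⨆ v : {v : V // v ≠ 0}, b v σ / ‖(v : V)‖) :
    Function.Injective b.flip := by
  rw [injective_iff_map_eq_zero]
  intro σ hσ
  have hsup : (⨆ v : {v : V // v ≠ 0}, b v σ / ‖(v : V)‖) ≤ 0 :=
    Real.iSup_le (fun v => by simp [← b.flip_apply, hσ]) le_rfl
  have : ‖σ‖ ≤ 0 := nonpos_of_mul_nonpos_right (hinfsup σ |>.trans hsup) hβ
  exact norm_le_zero_iff.1 this

theorem stmt1_general {V Λ : Type*}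
    [NormedAddCommGroup V] [InnerProductSpace ℝ V] [FiniteDimensional ℝ V]
    [NormedAddCommGroup Λ] [InnerProductSpace ℝ Λ] [FiniteDimensional ℝ Λ]
    (a : V →ₗ[ℝ] V →ₗ[ℝ] ℝ) (b : V →ₗ[ℝ] Λ →ₗ[ℝ] ℝ)
    (α : ℝ) (hα : 0 < α)
    (hcoer : ∀ v : V, (∀ ρ : Λ, b v ρ = 0) → α * ‖v‖ ^ 2 ≤ a v v)
    (β : ℝ) (hβ : 0 < β)
    (hinfsup : ∀ σ : Λ, β * ‖σ‖ ≤ ⨆ v : {v : V // v ≠ 0}, b v σ / ‖(v : V)‖)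
    (ℓ : V →ₗ[ℝ] ℝ) :
    ∃! p : V × Λ, (∀ v : V, a p.1 v + b v p.2 = ℓ v) ∧ (∀ ρ : Λ, b p.1 ρ = 0) := by
  have hdef : ∀ v, b v = 0 → a v v = 0 → v = 0 := by
    intro v hv havv
    have hsq : ‖v‖ ^ 2 ≤ 0 :=
      nonpos_of_mul_nonpos_right (havv ▸ hcoer v fun ρ => by simp [hv]) hα
    exact norm_eq_zero.1 ((sq_nonpos_iff _).1 hsq)
  exact existsUnique_saddlePoint hdef (LinearMap.flip_injective_of_infSup hβ hinfsup) ℓ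

theorem stmt1 {V Λ : Type*}
    [NormedAddCommGroup V] [InnerProductSpace ℝ V] [FiniteDimensional ℝ V]
    [NormedAddCommGroup Λ] [InnerProductSpace ℝ Λ] [FiniteDimensional ℝ Λ]
    (a : V →ₗ[ℝ] V →ₗ[ℝ] ℝ) (b : V →ₗ[ℝ] Λ →ₗ[ℝ] ℝ)
    (hsymm : ∀ u v : V, a u v = a v u)
    (Ma : ℝ) (hbda : ∀ u v : V, |a u v| ≤ Ma * ‖u‖ * ‖v‖)
    (α : ℝ) (hα : 0 < α)
    (hcoer : ∀ v : V, (∀ ρ : Λ, b v ρ = 0) → α * ‖v‖ ^ 2 ≤ a v v)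
    (Mb : ℝ) (hbdb : ∀ (v : V) (ρ : Λ), |b v ρ| ≤ Mb * ‖v‖ * ‖ρ‖)
    (β : ℝ) (hβ : 0 < β)
    (hinfsup : ∀ σ : Λ, β * ‖σ‖ ≤ ⨆ v : {v : V // v ≠ 0}, b v σ / ‖(v : V)‖)
    (ℓ : V →ₗ[ℝ] ℝ) :
    ∃! p : V × Λ, (∀ v : V, a p.1 v + b v p.2 = ℓ v) ∧ (∀ ρ : Λ, b p.1 ρ = 0) :=
  stmt1_general a b α hα hcoer β hβ hinfsup ℓ
end

section
/- Under the same Brezzi conditions, the solution (u, λ) of the saddle point problem satisfies the stability estimate ‖u‖ + ‖λ‖ ≤ C‖ℓ‖, where C depends only on the boundedness constants, the coercivity constant on the kernel, and the inf-sup constant, and ‖ℓ‖ is the operator norm of the functional ℓ. -/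
/-!
Testing the first equation with `v = u` kills the multiplier term, because `u` lies in the kernel
of `b`; coercivity on the kernel then gives `α ‖u‖ ≤ ‖ℓ‖`. For the multiplier, the first equation
reads `b v λ = ℓ v - a u v ≤ (‖ℓ‖ + |M_a| ‖u‖) ‖v‖`, so the inf-sup condition gives
`β ‖λ‖ ≤ ‖ℓ‖ + |M_a| ‖ℓ‖ / α`.
-/

lemma iSup_div_norm_le {V : Type*} [NormedAddCommGroup V] {f : V → ℝ} {K : ℝ} (hK : 0 ≤ K)
    (hf : ∀ v, f v ≤ K * ‖v‖) : ⨆ v : {v : V // v ≠ 0}, f v / ‖(v : V)‖ ≤ K := by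
  refine Real.iSup_le (fun ⟨v, hv⟩ => ?_) hK
  rw [div_le_iff₀ (norm_pos_iff.mpr hv)]
  exact hf v

namespace SaddlePoint

variable {V Λ : Type*} [NormedAddCommGroup V] [NormedSpace ℝ V] [NormedAddCommGroup Λ]
  [Module ℝ Λ] {a : V →ₗ[ℝ] V →ₗ[ℝ] ℝ} {b : V →ₗ[ℝ] Λ →ₗ[ℝ] ℝ} {ℓ : V →L[ℝ] ℝ} {u : V} {lam : Λ}

lemma norm_primal_le {α : ℝ} (hα : 0 < α)
    (hcoer : ∀ v : V, (∀ ρ : Λ, b v ρ = 0) → α * ‖v‖ ^ 2 ≤ a v v)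
    (heq : ∀ v : V, a u v + b v lam = ℓ v) (hker : ∀ ρ : Λ, b u ρ = 0) :
    ‖u‖ ≤ ‖ℓ‖ / α := by
  have hauu : a u u = ℓ u := by simpa [hker lam] using heq u
  have hcoer_u : α * ‖u‖ ^ 2 ≤ ℓ u := hauu ▸ hcoer u hker
  have hℓu : ℓ u ≤ ‖ℓ‖ * ‖u‖ := (le_abs_self _).trans (ℓ.le_opNorm u)
  rw [le_div_iff₀ hα]
  nlinarith [norm_nonneg u, norm_nonneg ℓ]

lemma mul_norm_multiplier_le {Ma β : ℝ} (hMa : ∀ u v : V, |a u v| ≤ Ma * ‖u‖ * ‖v‖)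
    (hinfsup : ∀ σ : Λ, β * ‖σ‖ ≤ ⨆ v : {v : V // v ≠ 0}, b v σ / ‖(v : V)‖)
    (heq : ∀ v : V, a u v + b v lam = ℓ v) :
    β * ‖lam‖ ≤ ‖ℓ‖ + |Ma| * ‖u‖ := by
  have hK : 0 ≤ ‖ℓ‖ + |Ma| * ‖u‖ := by positivity
  refine (hinfsup lam).trans (iSup_div_norm_le (f := fun v => b v lam) hK fun v => ?_)
  have hℓv : ℓ v ≤ ‖ℓ‖ * ‖v‖ := (le_abs_self _).trans (ℓ.le_opNorm v)
  have hauv : -a u v ≤ |Ma| * ‖u‖ * ‖v‖ :=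
    (neg_le_abs _).trans ((hMa u v).trans (by gcongr; exact le_abs_self Ma))
  linarith [heq v]

end SaddlePoint

open SaddlePoint in
theorem stmt2 (Ma α Mb β : ℝ) (hα : 0 < α) (hβ : 0 < β) :
    ∃ C : ℝ, 0 < C ∧
      ∀ (V Λ : Type)
        (_ : NormedAddCommGroup V), ∀ (_ : InnerProductSpace ℝ V)
        (_ : FiniteDimensional ℝ V)
        (_ : NormedAddCommGroup Λ), ∀ (_ : InnerProductSpace ℝ Λ)
        (_ : FiniteDimensional ℝ Λ)
        (a : V →ₗ[ℝ] V →ₗ[ℝ] ℝ) (b : V →ₗ[ℝ] Λ →ₗ[ℝ] ℝ)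
        (_ : ∀ u v : V, a u v = a v u)
        (_ : ∀ u v : V, |a u v| ≤ Ma * ‖u‖ * ‖v‖)
        (_ : ∀ v : V, (∀ ρ : Λ, b v ρ = 0) → α * ‖v‖ ^ 2 ≤ a v v)
        (_ : ∀ (v : V) (ρ : Λ), |b v ρ| ≤ Mb * ‖v‖ * ‖ρ‖)
        (_ : ∀ σ : Λ, β * ‖σ‖ ≤ ⨆ v : {v : V // v ≠ 0}, b v σ / ‖(v : V)‖)
        (ℓ : V →L[ℝ] ℝ) (u : V) (lam : Λ)
        (_ : ∀ v : V, a u v + b v lam = ℓ v)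
        (_ : ∀ ρ : Λ, b u ρ = 0),
        ‖u‖ + ‖lam‖ ≤ C * ‖ℓ‖ := by
  refine ⟨1 / α + (1 + |Ma| / α) / β, by positivity, ?_⟩
  intro V Λ _ _ _ _ _ _ a b _ hMa hcoer _ hinfsup ℓ u lam heq hker
  have hu : ‖u‖ ≤ ‖ℓ‖ / α := norm_primal_le hα hcoer heq hker
  have hlam : ‖lam‖ ≤ (‖ℓ‖ + |Ma| * (‖ℓ‖ / α)) / β := by
    rw [le_div_iff₀' hβ]
    exact (mul_norm_multiplier_le hMa hinfsup heq).trans (by gcongr)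
  calc ‖u‖ + ‖lam‖ ≤ ‖ℓ‖ / α + (‖ℓ‖ + |Ma| * (‖ℓ‖ / α)) / β := add_le_add hu hlam
    _ = (1 / α + (1 + |Ma| / α) / β) * ‖ℓ‖ := by field_simp
end
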